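/- arXiv:1111.6310 — 2 statements merged into one kernel-verified Lean document; each statement's English description precedes it below -/
import Mathlib

section
/- For all integers l ≥ 0 and 0 ≤ k ≤ l, the element g_l = ∏_{m=1}^{l} Φ_m(q)^{⌊(l+1)/m⌋ − 1} divides {k}_q!·{l−k}_q! in ℤ[q,q^{-1}], where Φ_m is the m-th cyclotomic polynomial. -/
open LaurentPolynomial Finset

/-- `{i}_q = q^i - 1` in `ℤ[q,q⁻¹]`. -/
noncomputable def qInt (i : ℤ) : LaurentPolynomial ℤ := T i - 1

/-- `{i}_{q,n} = {i}_q {i-1}_q ⋯ {i-n+1}_q`. -/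
noncomputable def qShift (i : ℤ) (n : ℕ) : LaurentPolynomial ℤ :=
  ∏ r ∈ Finset.range n, qInt (i - r)

/-- `{n}_q! = {n}_{q,n}`. -/
noncomputable def qFact (n : ℕ) : LaurentPolynomial ℤ := qShift n n

/-- `g_l = ∏_{m=1}^{l} Φ_m(q)^{⌊(l+1)/m⌋ - 1}`. -/
noncomputable def gElt (l : ℕ) : LaurentPolynomial ℤ :=
  ∏ m ∈ Finset.Icc 1 l, (Polynomial.cyclotomic m ℤ).toLaurent ^ ((l + 1) / m - 1)

/-!
Since `q^i - 1 = ∏_{m ∣ i} Φ_m`, the cyclotomic polynomial `Φ_m` occurs in `{n}_q!` with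
multiplicity `⌊n/m⌋`, the number of multiples of `m` in `1, …, n`. So everything lives in `ℤ[q]`,
and it suffices to compare exponents: `⌊(l+1)/m⌋ - 1 ≤ ⌊k/m⌋ + ⌊(l-k)/m⌋`, because the two
remainders of `k` and `l - k` modulo `m`, plus one, add up to less than `2m`.
-/

open Polynomial

theorem add_add_one_div_le_div_add_div_add_one (a b m : ℕ) :
    (a + b + 1) / m ≤ a / m + b / m + 1 := by
  rcases m.eq_zero_or_pos with rfl | hm
  · simp
  rw [← Nat.lt_add_one_iff, Nat.div_lt_iff_lt_mul hm]
  have := Nat.div_add_mod a m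
  have := Nat.div_add_mod b m
  have := Nat.mod_lt a hm
  have := Nat.mod_lt b hm
  nlinarith

theorem prod_Icc_X_pow_sub_one_eq_prod_cyclotomic_pow (R : Type*) [CommRing R] (n : ℕ) :
    ∏ i ∈ Icc 1 n, (X ^ i - 1 : R[X]) = ∏ m ∈ Icc 1 n, cyclotomic m R ^ (n / m) := by
  have hdivisors : ∀ i ∈ Icc 1 n, i.divisors = {m ∈ Icc 1 n | m ∣ i} := by
    intro i hi
    rw [mem_Icc] at hi
    ext m
    simp only [Nat.mem_divisors, mem_filter, mem_Icc]
    constructor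
    · rintro ⟨hm, -⟩
      exact ⟨⟨Nat.pos_of_dvd_of_pos hm (by omega), (Nat.le_of_dvd (by omega) hm).trans hi.2⟩, hm⟩
    · rintro ⟨-, hm⟩
      exact ⟨hm, by omega⟩
  calc ∏ i ∈ Icc 1 n, (X ^ i - 1 : R[X])
      = ∏ i ∈ Icc 1 n, ∏ m ∈ Icc 1 n with m ∣ i, cyclotomic m R :=
        prod_congr rfl fun i hi => by
          rw [← prod_cyclotomic_eq_X_pow_sub_one (mem_Icc.1 hi).1, hdivisors i hi]
    _ = ∏ m ∈ Icc 1 n, ∏ i ∈ Icc 1 n with m ∣ i, cyclotomic m R := by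
        simp_rw [prod_filter]
        exact prod_comm
    _ = ∏ m ∈ Icc 1 n, cyclotomic m R ^ (n / m) :=
        prod_congr rfl fun m _ => by
          rw [prod_const, ← Nat.Ioc_filter_dvd_card_eq_div, ← Icc_add_one_left_eq_Ioc, zero_add]

theorem qFact_eq_prod_Icc (n : ℕ) : qFact n = ∏ i ∈ Icc 1 n, qInt i := by
  rw [qFact, qShift]
  refine prod_nbij' (n - ·) (n - ·) ?_ ?_ ?_ ?_ ?_ <;> intro i hi <;>
    simp only [mem_range, mem_Icc] at hi ⊢ <;> try omega
  rw [Nat.cast_sub hi.le]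

theorem qInt_natCast (i : ℕ) : qInt i = toLaurent (X ^ i - 1 : ℤ[X]) := by
  simp [qInt]

theorem qFact_eq_toLaurent_prod_cyclotomic_pow {n N : ℕ} (hnN : n ≤ N) :
    qFact n = toLaurent (∏ m ∈ Icc 1 N, cyclotomic m ℤ ^ (n / m)) := by
  simp_rw [qFact_eq_prod_Icc, qInt_natCast, ← map_prod,
    prod_Icc_X_pow_sub_one_eq_prod_cyclotomic_pow]
  congr 1
  refine prod_subset (Icc_subset_Icc le_rfl hnN) fun m hm hmn => ?_
  rw [mem_Icc] at hm hmn
  rw [Nat.div_eq_of_lt (by omega), pow_zero]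

theorem gElt_eq_toLaurent (l : ℕ) :
    gElt l = toLaurent (∏ m ∈ Icc 1 l, cyclotomic m ℤ ^ ((l + 1) / m - 1)) := by
  simp [gElt]

/-- For all `0 ≤ k ≤ l`, `g_l` divides `{k}_q! {l-k}_q!` in `ℤ[q,q⁻¹]`. -/
theorem gElt_dvd_qFact_mul_qFact (l k : ℕ) (h : k ≤ l) :
    gElt l ∣ qFact k * qFact (l - k) := by
  rw [gElt_eq_toLaurent, qFact_eq_toLaurent_prod_cyclotomic_pow h,
    qFact_eq_toLaurent_prod_cyclotomic_pow (Nat.sub_le l k), ← map_mul, ← prod_mul_distrib]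
  refine map_dvd _ (prod_dvd_prod_of_dvd _ _ fun m _ => ?_)
  rw [← pow_add]
  refine pow_dvd_pow _ (Nat.sub_le_of_le_add ?_)
  simpa [h] using add_add_one_div_le_div_add_div_add_one k (l - k) m
end

section
/- Let l ≥ 0, 0 ≤ i ≤ l, s ≥ 0 be integers and let j ∈ ℤ. Then {s}_q! divides the Laurent polynomial Σ_{p=0}^{s} (−1)^{s−p} q^{p(p+1)/2 + (2i−s)p} [s choose p]_q · {(j+p)+l−1}_{q, l−i} · {(j+p)−1}_{q, l−i} in ℤ[q,q^{-1}]. (This is the Laurent-polynomial content of the statement that {l}_q!·tr_q^{P̃'_l} maps Lusztig's integral form U_{ℤ,q}^{ev} into ℤ[q,q^{-1}].) -/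
open LaurentPolynomial Finset

/-!
Each summand is `w p · f (q^p)`, where `w p = (-1)^(s-p) q^(p(p+1)/2 + (2i-s)p) [s choose p]_q` and
`f` is a polynomial over `ℤ[q,q⁻¹]`: every factor of the two shifted products has the form
`q^c · q^p - 1`. By linearity it suffices to take `f = X^k`, and then the `q`-binomial theorem
evaluates the sum to `{m+s}_{q,s}` with `m = 2i - s + k`, a product of `s` consecutive `q`-integers.
Such products are divisible by `{s}_q!` for every integer top index: consecutive ones differ by
`q^(c-s) {s+1}_q {c}_{q,s}`, so divisibility propagates along `ℤ` from `{s}_{q,s+1} = 0`.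
-/

lemma T_ne_one {R : Type*} [Semiring R] [Nontrivial R] {k : ℤ} (hk : k ≠ 0) :
    (T k : LaurentPolynomial R) ≠ 1 := by
  intro h
  have := congr_arg (fun f => f.coeff k) (h.trans T_zero.symm)
  simp only [T_apply, if_neg hk.symm] at this
  exact one_ne_zero this

lemma qInt_zero : qInt 0 = 0 := by simp [qInt, T_zero]

lemma qInt_ne_zero {k : ℤ} (hk : k ≠ 0) : qInt k ≠ 0 :=
  sub_ne_zero.mpr (T_ne_one hk)

lemma qFact_ne_zero (n : ℕ) : qFact n ≠ 0 := by
  unfold qFact qShift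
  exact prod_ne_zero_iff.mpr fun r hr => qInt_ne_zero (by have := mem_range.mp hr; omega)

lemma qShift_zero (i : ℤ) : qShift i 0 = 1 := prod_range_zero _

lemma qShift_succ (i : ℤ) (n : ℕ) : qShift i (n + 1) = qShift i n * qInt (i - n) :=
  prod_range_succ _ _

lemma qShift_succ' (i : ℤ) (n : ℕ) : qShift i (n + 1) = qInt i * qShift (i - 1) n := by
  simp only [qShift, prod_range_succ', Nat.cast_add, Nat.cast_one, Nat.cast_zero, sub_zero,
    sub_sub, add_comm (1 : ℤ)]
  exact mul_comm _ _

lemma qFact_succ (n : ℕ) : qFact (n + 1) = qInt (n + 1) * qFact n := by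
  rw [qFact, qShift_succ', Nat.cast_succ, add_sub_cancel_right, qFact]

lemma qShift_succ_sub_qShift (c : ℤ) (s : ℕ) :
    qShift (c + 1) (s + 1) - qShift c (s + 1) = T (c - s) * qInt (s + 1) * qShift c s := by
  rw [qShift_succ', add_sub_cancel_right, qShift_succ]
  have hT : (T (c - s) * T (s + 1) : LaurentPolynomial ℤ) = T (c + 1) := by
    rw [← T_add]; ring_nf
  simp only [qInt]
  linear_combination (-qShift c s) * hT

lemma qFact_dvd_qShift (s : ℕ) (c : ℤ) : qFact s ∣ qShift c s := by
  induction s generalizing c with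
  | zero => simp [qFact, qShift_zero]
  | succ s ih =>
    have hstep (c : ℤ) : qFact (s + 1) ∣ qShift (c + 1) (s + 1) - qShift c (s + 1) := by
      rw [qShift_succ_sub_qShift, qFact_succ, mul_assoc]
      exact dvd_mul_of_dvd_right (mul_dvd_mul_left _ (ih c)) _
    induction c using Int.inductionOn' (b := s) with
    | zero => rw [qShift_succ, sub_self, qInt_zero, mul_zero]; exact dvd_zero _
    | succ c _ hc => exact (dvd_sub_left hc).mp (hstep c)
    | pred c _ hc =>
      have h := hstep (c - 1)
      rw [sub_add_cancel] at h
      exact (dvd_sub_right hc).mp h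

lemma triangle_succ (p : ℤ) : (p + 1) * (p + 1 + 1) / 2 = p * (p + 1) / 2 + (p + 1) := by
  rw [show (p + 1) * (p + 1 + 1) = p * (p + 1) + (p + 1) * 2 by ring,
    Int.add_mul_ediv_right _ _ two_ne_zero]

section GaussianBinomial

variable {B : ℕ → ℕ → LaurentPolynomial ℤ}
  (hB : ∀ a r : ℕ, B a r * qFact r = qShift a r)
include hB

lemma qBinom_zero_right (a : ℕ) : B a 0 = 1 := by
  simpa [qFact, qShift_zero] using hB a 0

lemma qBinom_eq_zero_of_lt {a r : ℕ} (h : a < r) : B a r = 0 := by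
  have hzero : qShift a r = 0 := prod_eq_zero (mem_range.mpr h) (by simp [qInt_zero])
  exact (mul_eq_zero.mp ((hB a r).trans hzero)).resolve_right (qFact_ne_zero r)

lemma qBinom_succ_succ (a r : ℕ) : B (a + 1) (r + 1) = B a r + T (r + 1) * B a (r + 1) := by
  refine mul_right_cancel₀ (qFact_ne_zero (r + 1)) ?_
  have hT : (T (r + 1) * T (a - r) : LaurentPolynomial ℤ) = T (a + 1) := by
    rw [← T_add]; ring_nf
  have hqInt : qInt (a + 1) = qInt (r + 1) + T (r + 1) * qInt (a - r) := by
    simp only [qInt]; linear_combination -hT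
  rw [add_mul, mul_assoc, hB, hB, qFact_succ, mul_left_comm, hB, Nat.cast_succ, qShift_succ',
    add_sub_cancel_right, qShift_succ, hqInt]
  ring

lemma qBinom_term_succ (s p : ℕ) (m : ℤ) :
    (-1) ^ (s - p) * T (((p : ℤ) + 1) * (p + 1 + 1) / 2 + m * (p + 1)) * B (s + 1) (p + 1) =
      T (m + 1) * ((-1) ^ (s - p) * T ((p : ℤ) * (p + 1) / 2 + (m + 1) * p) * B s p) +
        (-1) ^ (s - p) * T (((p : ℤ) + 1) * (p + 1 + 1) / 2 + (m + 1) * (p + 1)) *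
          B s (p + 1) := by
  have h₁ : (T (((p : ℤ) + 1) * (p + 1 + 1) / 2 + m * (p + 1)) : LaurentPolynomial ℤ) =
      T (m + 1) * T ((p : ℤ) * (p + 1) / 2 + (m + 1) * p) := by
    rw [← T_add]; congr 1; linear_combination triangle_succ p
  have h₂ : (T (((p : ℤ) + 1) * (p + 1 + 1) / 2 + m * (p + 1)) * T (p + 1) :
      LaurentPolynomial ℤ) =
      T (((p : ℤ) + 1) * (p + 1 + 1) / 2 + (m + 1) * (p + 1)) := by
    rw [← T_add]; ring_nf
  rw [qBinom_succ_succ hB, ← h₂, h₁]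
  ring

lemma sum_qBinom_eq_qShift (s : ℕ) (m : ℤ) :
    ∑ p ∈ range (s + 1), (-1) ^ (s - p) * T ((p : ℤ) * (p + 1) / 2 + m * p) * B s p =
      qShift (m + s) s := by
  induction s generalizing m with
  | zero => simp [qBinom_zero_right hB, qShift_zero]
  | succ s ih =>
    have hshifted : ∑ q ∈ range (s + 2),
        (-1) ^ (s + 1 - q) * T ((q : ℤ) * (q + 1) / 2 + (m + 1) * q) * B s q =
          -qShift (m + 1 + s) s := by
      rw [sum_range_succ, qBinom_eq_zero_of_lt hB (Nat.lt_succ_self s), mul_zero, add_zero,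
        ← ih, ← sum_neg_distrib]
      refine sum_congr rfl fun q hq => ?_
      rw [Nat.sub_add_comm (Nat.lt_succ_iff.mp (mem_range.mp hq)), pow_succ]
      ring
    rw [sum_range_succ'] at hshifted
    rw [sum_range_succ']
    simp only [Nat.cast_succ, Nat.add_sub_add_right, Nat.cast_zero, zero_mul, mul_zero, zero_add,
      Int.zero_ediv, T_zero, qBinom_zero_right hB, qBinom_term_succ hB, sum_add_distrib,
      ← mul_sum, ih] at hshifted ⊢
    rw [add_assoc, hshifted, show m + (s + 1) = m + 1 + s by ring, qShift_succ,
      add_sub_cancel_right, qInt]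
    ring

end GaussianBinomial

lemma dvd_sum_mul_of_mem_adjoin {R ι : Type*} [CommRing R] (S : Finset ι) (w x : ι → R)
    {d : R} (hd : ∀ k : ℕ, d ∣ ∑ i ∈ S, w i * x i ^ k) {f : ι → R}
    (hf : f ∈ Algebra.adjoin R {x}) :
    d ∣ ∑ i ∈ S, w i * f i := by
  obtain ⟨P, rfl⟩ := Algebra.adjoin_mem_exists_aeval R x hf
  have heval (i : ι) :
      Polynomial.aeval x P i = ∑ k ∈ range (P.natDegree + 1), P.coeff k * x i ^ k := by
    rw [Polynomial.aeval_pi_apply₂, Polynomial.coe_aeval_eq_eval, Polynomial.eval_eq_sum_range]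
  simp_rw [heval, mul_sum]
  rw [sum_comm]
  refine dvd_sum fun k _ => ?_
  simp_rw [mul_left_comm (w _)]
  rw [← mul_sum]
  exact dvd_mul_of_dvd_right (hd k) _

lemma qShift_add_mem_adjoin (a : ℤ) (n : ℕ) :
    (fun p : ℕ => qShift (a + p) n) ∈
      Algebra.adjoin (LaurentPolynomial ℤ) {fun p : ℕ => T (p : ℤ)} := by
  have hfactor : ∀ r : ℕ, (fun p : ℕ => qInt (a + p - r)) =
      algebraMap (LaurentPolynomial ℤ) (ℕ → LaurentPolynomial ℤ) (T (a - r)) *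
        (fun p : ℕ => (T (p : ℤ) : LaurentPolynomial ℤ)) - 1 := by
    intro r
    funext p
    simp only [qInt, Pi.sub_apply, Pi.mul_apply, Pi.one_apply, Pi.algebraMap_apply,
      Algebra.algebraMap_self, RingHom.id_apply, ← T_add]
    ring_nf
  simp_rw [qShift, ← Finset.prod_fn, hfactor]
  refine Subalgebra.prod_mem _ fun r _ => Subalgebra.sub_mem _ (Subalgebra.mul_mem _
    (Subalgebra.algebraMap_mem _ _) (Algebra.subset_adjoin rfl)) (Subalgebra.one_mem _)

theorem qFact_dvd_trace_sum_general (l i s : ℕ) (j : ℤ)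
    (B : ℕ → ℕ → LaurentPolynomial ℤ)
    (hB : ∀ a r : ℕ, B a r * qFact r = qShift a r) :
    qFact s ∣ ∑ p ∈ Finset.range (s + 1),
      (-1) ^ (s - p) * T ((p : ℤ) * (p + 1) / 2 + (2 * (i : ℤ) - s) * p) * B s p *
        qShift ((j + p) + l - 1) (l - i) * qShift ((j + p) - 1) (l - i) := by
  have hf : (fun p : ℕ => qShift ((j + l - 1) + p) (l - i) * qShift ((j - 1) + p) (l - i)) ∈
      Algebra.adjoin (LaurentPolynomial ℤ) {fun p : ℕ => T (p : ℤ)} :=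
    Subalgebra.mul_mem _ (qShift_add_mem_adjoin _ _) (qShift_add_mem_adjoin _ _)
  have hmoment (k : ℕ) : qFact s ∣ ∑ p ∈ range (s + 1),
      (-1) ^ (s - p) * T ((p : ℤ) * (p + 1) / 2 + (2 * (i : ℤ) - s) * p) * B s p *
        T (p : ℤ) ^ k := by
    have hexp (p : ℕ) : (T ((p : ℤ) * (p + 1) / 2 + (2 * (i : ℤ) - s) * p) * T (p : ℤ) ^ k :
        LaurentPolynomial ℤ) = T ((p : ℤ) * (p + 1) / 2 + (2 * i - s + k) * p) := by
      rw [T_pow, ← T_add]; ring_nf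
    simp_rw [mul_right_comm _ (B s _), mul_assoc _ (T _), hexp, sum_qBinom_eq_qShift hB]
    exact qFact_dvd_qShift s _
  refine (dvd_sum_mul_of_mem_adjoin _ _ _ hmoment hf).trans
    (dvd_of_eq (sum_congr rfl fun p _ => ?_))
  rw [show j + p + l - 1 = j + l - 1 + p by ring, show j + p - 1 = j - 1 + p by ring]
  ring

/-- For `0 ≤ i ≤ l`, `s ≥ 0` and `j ∈ ℤ`, the `q`-factorial `{s}_q!` divides
`Σ_{p=0}^{s} (−1)^{s−p} q^{p(p+1)/2 + (2i−s)p} [s choose p]_q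
  {(j+p)+l−1}_{q,l−i} {(j+p)−1}_{q,l−i}`,
where the Gaussian binomial `B a r = [a choose r]_q` is characterized by
`[a choose r]_q · {r}_q! = {a}_{q,r}`. -/
theorem qFact_dvd_trace_sum (l i s : ℕ) (hi : i ≤ l) (j : ℤ)
    (B : ℕ → ℕ → LaurentPolynomial ℤ)
    (hB : ∀ a r : ℕ, B a r * qFact r = qShift a r) :
    qFact s ∣ ∑ p ∈ Finset.range (s + 1),
      (-1) ^ (s - p) * T ((p : ℤ) * (p + 1) / 2 + (2 * (i : ℤ) - s) * p) * B s p *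
        qShift ((j + p) + l - 1) (l - i) * qShift ((j + p) - 1) (l - i) :=
  qFact_dvd_trace_sum_general l i s j B hB
end
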